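/- arXiv:2012.01483 — 6 statements merged into one kernel-verified Lean document; each statement's English description precedes it below -/
import Mathlib

section
/- In any triangulation of the 2-dimensional sphere there exist two adjacent vertices v and w with deg(v) ≤ 11 and deg(w) ≤ 11. -/
/-!
Suppose no edge joins two vertices of degree at most 11, and let `a` and `b` count the vertices
of degree `≤ 11` and `≥ 12`. Double counting gives `3F = 2E`, so Euler's formula yields
`E = 3V - 6` and `F = 2V - 4`; moreover a vertex of degree `d` lies in exactly `d` faces. A face
contains at most one low vertex, and each low vertex lies in at least 3 faces, so `3a ≤ F`,
i.e. `a ≤ 2b - 4`. On the other hand `3a + 12b ≤ ∑ deg = 2E = 6(a + b) - 12`, i.e.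
`a ≥ 2b + 4`, a contradiction.
-/

open Finset

section Triangulation

variable {V : Type*} [DecidableEq V] {faces edges : Finset (Finset V)}

theorem card_eq_two_of_mem_edges
    (hedges : edges = faces.biUnion fun f => f.powersetCard 2) {e : Finset V} (he : e ∈ edges) :
    #e = 2 := by
  subst hedges
  obtain ⟨f, -, he⟩ := mem_biUnion.1 he
  exact (mem_powersetCard.1 he).2

theorem mem_edges_of_subset_of_card_eq_two
    (hedges : edges = faces.biUnion fun f => f.powersetCard 2) {f e : Finset V}
    (hf : f ∈ faces) (hef : e ⊆ f) (he : #e = 2) : e ∈ edges :=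
  hedges ▸ mem_biUnion.2 ⟨f, hf, mem_powersetCard.2 ⟨hef, he⟩⟩

theorem filter_subset_edges_eq_powersetCard
    (hedges : edges = faces.biUnion fun f => f.powersetCard 2) {f : Finset V} (hf : f ∈ faces) :
    {e ∈ edges | e ⊆ f} = f.powersetCard 2 := by
  ext e
  simp only [mem_filter, mem_powersetCard]
  exact ⟨fun ⟨he, hef⟩ => ⟨hef, card_eq_two_of_mem_edges hedges he⟩,
    fun ⟨hef, he⟩ => ⟨mem_edges_of_subset_of_card_eq_two hedges hf hef he, hef⟩⟩

theorem sum_card_filter_mem_eq_sum_card [Fintype V] (S : Finset (Finset V)) :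
    ∑ v, #{s ∈ S | v ∈ s} = ∑ s ∈ S, #s := by
  simpa [bipartiteAbove, bipartiteBelow] using
    sum_card_bipartiteAbove_eq_sum_card_bipartiteBelow (fun (v : V) (s : Finset V) => v ∈ s)
      (s := univ) (t := S)

theorem sum_degree_eq_two_mul_card_edges [Fintype V]
    (hedges : edges = faces.biUnion fun f => f.powersetCard 2) :
    ∑ v, #{e ∈ edges | v ∈ e} = 2 * #edges := by
  rw [sum_card_filter_mem_eq_sum_card, sum_congr rfl fun e => card_eq_two_of_mem_edges hedges,
    sum_const, smul_eq_mul, mul_comm]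

theorem card_edges_mul_two_eq_card_faces_mul_three
    (hedges : edges = faces.biUnion fun f => f.powersetCard 2)
    (hcard : ∀ f ∈ faces, #f = 3) (htwo : ∀ e ∈ edges, #{f ∈ faces | e ⊆ f} = 2) :
    #edges * 2 = #faces * 3 :=
  card_mul_eq_card_mul (fun (e f : Finset V) => e ⊆ f) htwo fun f hf => by
    rw [bipartiteBelow, filter_subset_edges_eq_powersetCard hedges hf, card_powersetCard,
      hcard f hf]
    rfl

theorem card_filter_mem_faces_eq_card_filter_mem_edges
    (hedges : edges = faces.biUnion fun f => f.powersetCard 2)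
    (hcard : ∀ f ∈ faces, #f = 3) (htwo : ∀ e ∈ edges, #{f ∈ faces | e ⊆ f} = 2) (v : V) :
    #{f ∈ faces | v ∈ f} = #{e ∈ edges | v ∈ e} := by
  -- Count the flags `v ∈ e ⊆ f`: an edge at `v` lies in two faces, all of them at `v`, and a
  -- face at `v` has two edges at `v`.
  have hedge : ∀ e ∈ {e ∈ edges | v ∈ e}, #{f ∈ {f ∈ faces | v ∈ f} | e ⊆ f} = 2 := by
    intro e he
    rw [mem_filter] at he
    rw [filter_filter, ← htwo e he.1]
    exact congrArg card (filter_congr fun f _ => and_iff_right_of_imp fun hef => hef he.2)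
  have hface : ∀ f ∈ {f ∈ faces | v ∈ f}, #{e ∈ {e ∈ edges | v ∈ e} | e ⊆ f} = 2 := by
    intro f hf
    rw [mem_filter] at hf
    calc #{e ∈ {e ∈ edges | v ∈ e} | e ⊆ f} = #{e ∈ f.powersetCard 2 | {v} ⊆ e} := by
          rw [← filter_subset_edges_eq_powersetCard hedges hf.1, filter_filter, filter_filter]
          simp only [singleton_subset_iff, and_comm]
      _ = 2 := by
          rw [card_filter_powersetCard_subset {v} f 2 (singleton_subset_iff.2 hf.2) (by simp),
            hcard f hf.1, card_singleton]
          rfl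
  have := card_mul_eq_card_mul (fun (e f : Finset V) => e ⊆ f) hedge hface
  omega

theorem card_mul_le_card_faces_of_independent
    (hedges : edges = faces.biUnion fun f => f.powersetCard 2)
    (hcard : ∀ f ∈ faces, #f = 3) (htwo : ∀ e ∈ edges, #{f ∈ faces | e ⊆ f} = 2)
    {A : Finset V} {m : ℕ} (hdeg : ∀ v ∈ A, m ≤ #{e ∈ edges | v ∈ e})
    (hind : ∀ v ∈ A, ∀ w ∈ A, ({v, w} : Finset V) ∉ edges) :
    #A * m ≤ #faces := by
  rw [← mul_one #faces]
  refine card_mul_le_card_mul (fun (v : V) (f : Finset V) => v ∈ f) (fun v hv => ?_)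
    fun f hf => card_le_one.2 ?_
  · rw [bipartiteAbove, card_filter_mem_faces_eq_card_filter_mem_edges hedges hcard htwo]
    exact hdeg v hv
  · intro v hv w hw
    rw [bipartiteBelow, mem_filter] at hv hw
    by_contra hvw
    refine hind v hv.1 w hw.1 (mem_edges_of_subset_of_card_eq_two hedges hf ?_ (card_pair hvw))
    exact insert_subset hv.2 (singleton_subset_iff.2 hw.2)

end Triangulation

theorem exists_adjacent_low_degree_general {V : Type*} [Fintype V] [DecidableEq V]
    (faces : Finset (Finset V)) (edges : Finset (Finset V))
    (hedges : edges = faces.biUnion fun f => f.powersetCard 2)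
    (hcard : ∀ f ∈ faces, f.card = 3)
    (htwo : ∀ e ∈ edges, (faces.filter fun f => e ⊆ f).card = 2)
    (hdeg : ∀ v : V, 3 ≤ (edges.filter fun e => v ∈ e).card)
    (heuler : (Fintype.card V : ℤ) - (edges.card : ℤ) + (faces.card : ℤ) = 2) :
    ∃ v w : V, ({v, w} : Finset V) ∈ edges ∧
      (edges.filter fun e => v ∈ e).card ≤ 11 ∧
      (edges.filter fun e => w ∈ e).card ≤ 11 := by
  by_contra! hcon
  set deg : V → ℕ := fun v => #{e ∈ edges | v ∈ e}
  set low : Finset V := {v | deg v ≤ 11}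
  have hind : ∀ v ∈ low, ∀ w ∈ low, ({v, w} : Finset V) ∉ edges := fun v hv w hw he =>
    (hcon v w he (mem_filter.1 hv).2).not_ge (mem_filter.1 hw).2
  have hlow := card_mul_le_card_faces_of_independent hedges hcard htwo (fun v _ => hdeg v) hind
  have hE := card_edges_mul_two_eq_card_faces_mul_three hedges hcard htwo
  have hsum : #low * 3 + #{v | ¬deg v ≤ 11} * 12 ≤ 2 * #edges := by
    rw [← sum_degree_eq_two_mul_card_edges hedges, ← sum_filter_add_sum_filter_not univ
      (deg · ≤ 11)]
    gcongr
    · simpa using card_nsmul_le_sum _ deg 3 fun v _ => hdeg v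
    · simpa using card_nsmul_le_sum _ deg 12 fun v hv => by simp at hv; omega
  have hV : #low + #{v | ¬deg v ≤ 11} = Fintype.card V :=
    (card_filter_add_card_filter_not _).trans card_univ
  omega

/-- **In any triangulation of the 2-sphere there exist two adjacent vertices of degree ≤ 11.**
A triangulation of S² is given combinatorially: a finite vertex set `V`, a set `faces` of
3-element subsets covering every vertex, whose edges (the 2-element subsets of faces) each lie
in exactly two faces, every vertex has degree at least 3, and Euler's formula
`V - E + F = 2` holds.  The degree of a vertex is the number of edges incident to it. -/
theorem exists_adjacent_low_degree {V : Type*} [Fintype V] [DecidableEq V]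
    (faces : Finset (Finset V)) (edges : Finset (Finset V))
    (hedges : edges = faces.biUnion fun f => f.powersetCard 2)
    (hcard : ∀ f ∈ faces, f.card = 3)
    (hcover : ∀ v : V, ∃ f ∈ faces, v ∈ f)
    (htwo : ∀ e ∈ edges, (faces.filter fun f => e ⊆ f).card = 2)
    (hdeg : ∀ v : V, 3 ≤ (edges.filter fun e => v ∈ e).card)
    (heuler : (Fintype.card V : ℤ) - (edges.card : ℤ) + (faces.card : ℤ) = 2) :
    ∃ v w : V, ({v, w} : Finset V) ∈ edges ∧
      (edges.filter fun e => v ∈ e).card ≤ 11 ∧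
      (edges.filter fun e => w ∈ e).card ≤ 11 :=
  exists_adjacent_low_degree_general faces edges hedges hcard htwo hdeg heuler
end

section
/- If X is an r-ample simplicial complex, then every simplicial complex on at most r+1 vertices embeds into X as an induced subcomplex. -/
/-- An abstract simplicial complex on a vertex type `V`: a family of nonempty finite
subsets of `V` (the simplices), closed under passing to nonempty subsets. -/
structure SimplicialComplex (V : Type*) where
  faces : Set (Finset V)
  not_empty_mem : ∅ ∉ faces
  down_closed : ∀ s ∈ faces, ∀ t ⊆ s, t ≠ ∅ → t ∈ faces

namespace SimplicialComplex

variable {V : Type*}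

/-- The vertex set of a simplicial complex. -/
def vertexSet (X : SimplicialComplex V) : Set V := {v | ({v} : Finset V) ∈ X.faces}

/-- The simplices of the induced subcomplex `X_U` on a set of vertices `U`. -/
def inducedFaces (X : SimplicialComplex V) (U : Set V) : Set (Finset V) :=
  {s | s ∈ X.faces ∧ ↑s ⊆ U}

/-- `A` is (the set of simplices of) a subcomplex of the induced subcomplex `X_U`. -/
def IsSubcomplexOfInduced (X : SimplicialComplex V) (U : Set V) (A : Set (Finset V)) : Prop :=
  A ⊆ X.inducedFaces U ∧ ∀ s ∈ A, ∀ t ⊆ s, t ≠ ∅ → t ∈ A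

/-- The simplices of the link of a vertex `v`: simplices `s` not containing `v`
with `s ∪ {v}` a simplex of `X`. -/
def linkFaces [DecidableEq V] (X : SimplicialComplex V) (v : V) : Set (Finset V) :=
  {s | v ∉ s ∧ s ≠ ∅ ∧ insert v s ∈ X.faces}

/-- The link of a vertex, as a simplicial complex. -/
def link [DecidableEq V] (X : SimplicialComplex V) (v : V) : SimplicialComplex V where
  faces := X.linkFaces v
  not_empty_mem := fun h => h.2.1 rfl
  down_closed := by
    rintro s ⟨hv, -, hs⟩ t hts ht
    exact ⟨fun h => hv (hts h), ht,
      X.down_closed _ hs _ (Finset.insert_subset_insert v hts) (by simp)⟩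

/-- `X` is `r`-ample: `X` is nonempty and for every set `U` of at most `r` vertices of `X`
and every subcomplex `A ⊆ X_U` there is a vertex `v ∉ U` with `lk_X(v) ∩ X_U = A`. -/
def IsAmple [DecidableEq V] (X : SimplicialComplex V) (r : ℕ) : Prop :=
  X.faces.Nonempty ∧
  ∀ U : Finset V, ↑U ⊆ X.vertexSet → U.card ≤ r →
    ∀ A : Set (Finset V), X.IsSubcomplexOfInduced ↑U A →
      ∃ v ∈ X.vertexSet, v ∉ U ∧ X.linkFaces v ∩ X.inducedFaces ↑U = A

/-- An embedding of a simplicial complex `A` into `X`: an injection of the vertices of `A`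
which identifies `A` with the induced subcomplex of `X` on the image. -/
def IsEmbedding {W : Type*} [DecidableEq W] (A : SimplicialComplex V)
    (X : SimplicialComplex W) (f : V → W) : Prop :=
  Set.InjOn f A.vertexSet ∧
  ∀ s : Finset V, ↑s ⊆ A.vertexSet → s.Nonempty → (s ∈ A.faces ↔ s.image f ∈ X.faces)

end SimplicialComplex

/-!
The vertices of `A` are embedded one at a time. If `f` embeds the induced subcomplex `A_S`
with `|S| ≤ r` and `a ∉ S` is a further vertex, then `f(lk_A(a) ∩ A_S)` is a subcomplex of
`X_{f(S)}`, so `r`-ampleness yields a vertex `w ∉ f(S)` with `lk_X(w) ∩ X_{f(S)}` equal to it;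
sending `a` to `w` then embeds `A_{S ∪ {a}}`, because a simplex `σ ∪ {a}` with `σ ⊆ S` lies in
`A` exactly when `σ ∈ lk_A(a)`, and likewise for `f(σ) ∪ {w}` in `X`.
-/

namespace SimplicialComplex

variable {V W : Type*}

lemma nonempty_of_mem_faces (X : SimplicialComplex V) {s : Finset V} (hs : s ∈ X.faces) :
    s.Nonempty :=
  Finset.nonempty_iff_ne_empty.2 fun h => X.not_empty_mem (h ▸ hs)

lemma insert_mem_faces_iff [DecidableEq V] (X : SimplicialComplex V) {v : V} {s : Finset V}
    {U : Set V} (hv : v ∉ s) (hs : s.Nonempty) (hsU : ↑s ⊆ U) :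
    insert v s ∈ X.faces ↔ s ∈ X.linkFaces v ∩ X.inducedFaces U :=
  ⟨fun h => ⟨⟨hv, hs.ne_empty, h⟩,
      X.down_closed _ h s (Finset.subset_insert v s) hs.ne_empty, hsU⟩,
    fun h => h.1.2.2⟩

lemma isSubcomplexOfInduced_linkFaces_inter [DecidableEq V] (X : SimplicialComplex V) (v : V)
    (U : Set V) : X.IsSubcomplexOfInduced U (X.linkFaces v ∩ X.inducedFaces U) :=
  ⟨Set.inter_subset_right, fun _ ⟨hl, hi⟩ t hts ht =>
    ⟨(X.link v).down_closed _ hl t hts ht, X.down_closed _ hi.1 t hts ht,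
      (Finset.coe_subset.2 hts).trans hi.2⟩⟩

def IsEmbeddingOn [DecidableEq W] (A : SimplicialComplex V) (X : SimplicialComplex W)
    (S : Finset V) (f : V → W) : Prop :=
  Set.InjOn f S ∧ ∀ s ⊆ S, s.Nonempty → (s ∈ A.faces ↔ s.image f ∈ X.faces)

namespace IsEmbeddingOn

variable [DecidableEq W] {A : SimplicialComplex V} {X : SimplicialComplex W} {S : Finset V}
  {f : V → W}

lemma image_subset_vertexSet (hf : A.IsEmbeddingOn X S f) (hS : ↑S ⊆ A.vertexSet) :
    ↑(S.image f) ⊆ X.vertexSet := by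
  intro w hw
  obtain ⟨x, hx, rfl⟩ := Finset.mem_image.1 hw
  have := (hf.2 {x} (by simpa using hx) (Finset.singleton_nonempty x)).1 (hS hx)
  rwa [Finset.image_singleton] at this

lemma image_isSubcomplexOfInduced (hf : A.IsEmbeddingOn X S f) {B : Set (Finset V)}
    (hB : A.IsSubcomplexOfInduced ↑S B) :
    X.IsSubcomplexOfInduced ↑(S.image f) (Finset.image f '' B) := by
  constructor
  · rintro _ ⟨s, hsB, rfl⟩
    obtain ⟨hsA, hsS⟩ := hB.1 hsB
    have hsS : s ⊆ S := Finset.coe_subset.1 hsS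
    exact ⟨(hf.2 s hsS (A.nonempty_of_mem_faces hsA)).1 hsA,
      Finset.coe_subset.2 (Finset.image_subset_image hsS)⟩
  · rintro _ ⟨s, hsB, rfl⟩ t hts ht
    obtain ⟨s', hs's, rfl⟩ := Finset.subset_image_iff.1 hts
    exact ⟨s', hB.2 s hsB s' hs's (by rintro rfl; exact ht rfl), rfl⟩

lemma update [DecidableEq V] (hf : A.IsEmbeddingOn X S f) {a : V} {w : W}
    (haS : a ∉ S) (ha : a ∈ A.vertexSet) (hw : w ∈ X.vertexSet) (hwS : w ∉ S.image f)
    (hlink : X.linkFaces w ∩ X.inducedFaces ↑(S.image f) =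
      Finset.image f '' (A.linkFaces a ∩ A.inducedFaces ↑S)) :
    A.IsEmbeddingOn X (insert a S) (Function.update f a w) := by
  have heq : Set.EqOn (Function.update f a w) f S := fun x hx =>
    Function.update_of_ne (by rintro rfl; exact haS hx) w f
  have himage : ∀ s ⊆ S, s.image (Function.update f a w) = s.image f := fun s hs =>
    Finset.image_congr (heq.mono (Finset.coe_subset.2 hs))
  refine ⟨?_, fun s hs hsne => ?_⟩
  · rw [Finset.coe_insert, Set.injOn_insert (by simpa using haS), heq.image_eq,
      Function.update_self]
    exact ⟨hf.1.congr heq.symm, by simpa using hwS⟩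
  by_cases has : a ∉ s
  · rw [himage s ((Finset.subset_insert_iff_of_notMem has).1 hs)]
    exact hf.2 s ((Finset.subset_insert_iff_of_notMem has).1 hs) hsne
  obtain ⟨s₀, has₀, rfl⟩ : ∃ s₀, a ∉ s₀ ∧ insert a s₀ = s :=
    ⟨s.erase a, Finset.notMem_erase a s, Finset.insert_erase (not_not.1 has)⟩
  have hs₀S : s₀ ⊆ S := (Finset.insert_subset_insert_iff has₀).1 hs
  rw [Finset.image_insert, Function.update_self, himage s₀ hs₀S]
  rcases s₀.eq_empty_or_nonempty with rfl | hs₀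
  · exact iff_of_true ha hw
  have hinj : Set.InjOn (Finset.image f) ↑S.powerset :=
    Finset.image_injOn_powerset_of_injOn hf.1
  have hlinkS : A.linkFaces a ∩ A.inducedFaces ↑S ⊆ ↑S.powerset := fun s hs =>
    Finset.mem_powerset.2 (Finset.coe_subset.1 hs.2.2)
  rw [A.insert_mem_faces_iff has₀ hs₀ (Finset.coe_subset.2 hs₀S),
    X.insert_mem_faces_iff (fun h => hwS (Finset.image_subset_image hs₀S h)) (hs₀.image f)
      (Finset.coe_subset.2 (Finset.image_subset_image hs₀S)),
    hlink, hinj.mem_image_iff hlinkS (Finset.mem_powerset.2 hs₀S)]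

end IsEmbeddingOn

lemma exists_isEmbeddingOn [DecidableEq V] [DecidableEq W] {X : SimplicialComplex W} {r : ℕ}
    (hX : X.IsAmple r) (A : SimplicialComplex V) (S : Finset V) (hS : ↑S ⊆ A.vertexSet)
    (hcard : S.card ≤ r + 1) : ∃ f : V → W, A.IsEmbeddingOn X S f := by
  induction S using Finset.induction_on with
  | empty =>
    obtain ⟨s, hs⟩ := hX.1
    obtain ⟨w, -⟩ := X.nonempty_of_mem_faces hs
    exact ⟨fun _ => w, by simp, fun s hs hsne => absurd (Finset.subset_empty.1 hs) hsne.ne_empty⟩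
  | @insert a S haS ih =>
    rw [Finset.coe_insert, Set.insert_subset_iff] at hS
    rw [Finset.card_insert_of_notMem haS] at hcard
    obtain ⟨f, hf⟩ := ih hS.2 (by omega)
    obtain ⟨w, hw, hwS, hlink⟩ := hX.2 (S.image f) (hf.image_subset_vertexSet hS.2)
      (Finset.card_image_le.trans (by omega)) _
      (hf.image_isSubcomplexOfInduced (A.isSubcomplexOfInduced_linkFaces_inter a ↑S))
    exact ⟨_, hf.update haS hS.1 hw hwS hlink⟩

end SimplicialComplex

open SimplicialComplex in
/-- **Any simplicial complex on at most `r+1` vertices embeds into an `r`-ample complex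
as an induced subcomplex.** -/
theorem embeds_into_ample {V W : Type*} [DecidableEq W]
    (X : SimplicialComplex W) (r : ℕ) (hX : X.IsAmple r)
    (A : SimplicialComplex V) (hfin : A.vertexSet.Finite)
    (hcard : A.vertexSet.ncard ≤ r + 1) :
    ∃ f : V → W, A.IsEmbedding X f := by
  classical
  obtain ⟨f, hinj, hfaces⟩ := exists_isEmbeddingOn hX A hfin.toFinset (by simp)
    (by rwa [← Set.ncard_eq_toFinset_card _ hfin])
  exact ⟨f, by simpa using hinj,
    fun s hs hsne => hfaces s (hfin.subset_toFinset.2 hs) hsne⟩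
end

section
/- The link of a vertex in an r-ample simplicial complex is (r-1)-ample. -/
/-!
A vertex `w` of `lk_X(v)` realises `A ⊆ (lk_X v)_U` as `lk_{lk_X v}(w) ∩ (lk_X v)_U` exactly
when `w` realises the cone `v * A` as `lk_X(w) ∩ X_{U ∪ {v}}`, because `s ↦ s ∪ {v}` matches
the simplices on both sides. Since `|U ∪ {v}| ≤ r`, the `r`-ampleness of `X` provides such a `w`.
-/

namespace SimplicialComplex

variable {V : Type*} [DecidableEq V] {X : SimplicialComplex V} {v w : V}

theorem vertexSet_link_subset (X : SimplicialComplex V) (v : V) :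
    (X.link v).vertexSet ⊆ X.vertexSet := fun _ ⟨_, _, h⟩ =>
  X.down_closed _ h _ (by simp) (by simp)

theorem mem_vertexSet_link_comm : w ∈ (X.link v).vertexSet ↔ v ∈ (X.link w).vertexSet := by
  simp [vertexSet, link, linkFaces, Finset.pair_comm, eq_comm]

/-- The simplices of the cone `v * A`, provided no simplex of `A` contains `v`. -/
def cone (v : V) (A : Set (Finset V)) : Set (Finset V) := {t | t = {v} ∨ t.erase v ∈ A}

theorem insert_mem_cone_iff {A : Set (Finset V)} {s : Finset V} (hvs : v ∉ s) (hs : s ≠ ∅) :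
    insert v s ∈ cone v A ↔ s ∈ A := by
  have hne : insert v s ≠ {v} := fun h =>
    hs (Finset.subset_singleton_iff.1 (h ▸ Finset.subset_insert v s) |>.resolve_right
      fun h' => hvs (h' ▸ Finset.mem_singleton_self v))
  simp [cone, hne, Finset.erase_insert hvs]

theorem isSubcomplexOfInduced_cone {U : Set V} {A : Set (Finset V)} (hv : v ∈ X.vertexSet)
    (hA : (X.link v).IsSubcomplexOfInduced U A) :
    X.IsSubcomplexOfInduced (insert v U) (cone v A) := by
  refine ⟨?_, ?_⟩
  · rintro t (rfl | ht)
    · exact ⟨hv, by simp⟩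
    · obtain ⟨⟨-, hne, hins⟩, htU⟩ := hA.1 ht
      have hsub : t ⊆ insert v (t.erase v) := Finset.insert_erase_subset v t
      refine ⟨X.down_closed _ hins _ hsub ?_, ?_⟩
      · rintro rfl
        exact hne (Finset.erase_empty v)
      · refine (Finset.coe_subset.2 hsub).trans ?_
        rw [Finset.coe_insert]
        exact Set.insert_subset_insert htU
  · rintro s (rfl | hs) t hts htne
    · exact .inl ((Finset.subset_singleton_iff.1 hts).resolve_left htne)
    · by_cases h : t.erase v = ∅
      · exact .inl (((Finset.erase_eq_empty_iff t v).1 h).resolve_left htne)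
      · exact .inr (hA.2 _ hs _ (Finset.erase_subset_erase v hts) h)

theorem mem_linkFaces_link_inter_inducedFaces_iff {U : Set V} {s : Finset V} :
    s ∈ (X.link v).linkFaces w ∩ (X.link v).inducedFaces U ↔
      v ∉ s ∧ s ≠ ∅ ∧ insert v s ∈ X.linkFaces w ∩ X.inducedFaces (insert v U) := by
  simp only [link, linkFaces, inducedFaces, Set.mem_inter_iff, Set.mem_ofPred_eq,
    Finset.mem_insert, Finset.coe_insert, not_or, Finset.insert_ne_empty, ne_eq, not_false_eq_true]
  constructor
  · rintro ⟨⟨hws, hs, ⟨hvw, hvs⟩, -, hvws⟩, ⟨-, -, hvs'⟩, hsU⟩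
    exact ⟨hvs, hs, ⟨⟨Ne.symm hvw, hws⟩, trivial, by rwa [Finset.insert_comm]⟩, hvs',
      Set.insert_subset_insert hsU⟩
  · rintro ⟨hvs, hs, ⟨⟨hwv, hws⟩, -, hwvs⟩, hvs', hsU⟩
    exact ⟨⟨hws, hs, ⟨Ne.symm hwv, hvs⟩, trivial, by rwa [Finset.insert_comm]⟩, ⟨hvs, hs, hvs'⟩,
      (Set.insert_subset_insert_iff (Finset.mem_coe.not.2 hvs)).1 hsU⟩

theorem linkFaces_link_inter_inducedFaces_eq {U : Set V} {A : Set (Finset V)}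
    (hA : (X.link v).IsSubcomplexOfInduced U A)
    (hw : X.linkFaces w ∩ X.inducedFaces (insert v U) = cone v A) :
    (X.link v).linkFaces w ∩ (X.link v).inducedFaces U = A := by
  ext s
  rw [mem_linkFaces_link_inter_inducedFaces_iff, hw]
  constructor
  · rintro ⟨hvs, hs, h⟩
    exact (insert_mem_cone_iff hvs hs).1 h
  · intro h
    obtain ⟨hvs, hs, -⟩ := (hA.1 h).1
    exact ⟨hvs, hs, (insert_mem_cone_iff hvs hs).2 h⟩

theorem IsAmple.exists_linkFaces_link_inter_inducedFaces_eq {r : ℕ} (hX : X.IsAmple r)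
    (hv : v ∈ X.vertexSet) {U : Finset V} (hU : ↑U ⊆ (X.link v).vertexSet) (hcard : U.card < r)
    {A : Set (Finset V)} (hA : (X.link v).IsSubcomplexOfInduced U A) :
    ∃ w ∈ (X.link v).vertexSet, w ∉ U ∧
      (X.link v).linkFaces w ∩ (X.link v).inducedFaces U = A := by
  have hvU : ↑(insert v U) ⊆ X.vertexSet := by
    rw [Finset.coe_insert]
    exact Set.insert_subset hv (hU.trans (X.vertexSet_link_subset v))
  have hcone : X.IsSubcomplexOfInduced ↑(insert v U) (cone v A) := by
    rw [Finset.coe_insert]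
    exact isSubcomplexOfInduced_cone hv hA
  obtain ⟨w, -, hwU, hw⟩ :=
    hX.2 _ hvU ((Finset.card_insert_le v U).trans hcard) _ hcone
  rw [Finset.coe_insert] at hw
  have hvw : {v} ∈ X.linkFaces w ∩ X.inducedFaces (insert v ↑U) := hw ▸ Or.inl rfl
  exact ⟨w, mem_vertexSet_link_comm.2 hvw.1, fun h => hwU (Finset.mem_insert_of_mem h),
    linkFaces_link_inter_inducedFaces_eq hA hw⟩

end SimplicialComplex

open SimplicialComplex in
/-- **The link of a vertex in an `r`-ample simplicial complex is `(r-1)`-ample.** -/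
theorem link_isAmple {V : Type*} [DecidableEq V]
    (X : SimplicialComplex V) (r : ℕ) (hr : 1 ≤ r) (hX : X.IsAmple r)
    (v : V) (hv : v ∈ X.vertexSet) :
    (X.link v).IsAmple (r - 1) := by
  have hample : ∀ U : Finset V, ↑U ⊆ (X.link v).vertexSet → U.card ≤ r - 1 →
      ∀ A : Set (Finset V), (X.link v).IsSubcomplexOfInduced ↑U A →
        ∃ w ∈ (X.link v).vertexSet, w ∉ U ∧
          (X.link v).linkFaces w ∩ (X.link v).inducedFaces ↑U = A :=
    fun U hU hcard A hA => hX.exists_linkFaces_link_inter_inducedFaces_eq hv hU (by omega) hA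
  obtain ⟨w, hw, -⟩ := hample ∅ (by simp) (by simp) ∅ ⟨Set.empty_subset _, by simp⟩
  exact ⟨⟨{w}, hw⟩, hample⟩
end

section
/- The link of every k-dimensional simplex in an r-ample simplicial complex is (r-k-1)-ample. -/
namespace SimplicialComplex

/-- The link of a simplex `σ` in `X`: the complex of simplices `τ` disjoint from `σ`
with `τ ∪ σ` a simplex of `X`. -/
def linkOf {V : Type*} [DecidableEq V] (X : SimplicialComplex V) (σ : Finset V) :
    SimplicialComplex V where
  faces := {s | Disjoint s σ ∧ s ≠ ∅ ∧ s ∪ σ ∈ X.faces}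
  not_empty_mem := fun h => h.2.1 rfl
  down_closed := by
    rintro s ⟨hd, -, hs⟩ t hts ht
    refine ⟨Finset.disjoint_of_subset_left hts hd, ht, ?_⟩
    exact X.down_closed _ hs _ (Finset.union_subset_union_left hts)
      fun h => ht (Finset.union_eq_empty.mp h).1

end SimplicialComplex

/-!
Let `L = lk σ` with `|σ| ≤ r`. Given `U` of at most `r - |σ|` vertices of `L` and a subcomplex
`A ⊆ L_U`, apply ampleness of `X` to `U ∪ σ` and the join of `A` with the simplex `σ`. The
resulting vertex `v` has `σ ∈ lk v`, so it is a vertex of `L`, and for `τ ∈ L_U` the simplex `τ`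
lies in the link of `v` in `L` iff `τ ∪ σ` lies in `lk v`, i.e. iff `τ ∈ A`.
-/

namespace SimplicialComplex

variable {V : Type*} [DecidableEq V] {X : SimplicialComplex V} {σ s : Finset V}

theorem vertexSet_linkOf_subset : (X.linkOf σ).vertexSet ⊆ X.vertexSet :=
  fun _ hv => X.down_closed _ hv.2.2 _ Finset.subset_union_left (by simp)

theorem mem_linkFaces_linkOf {v : V} (hvσ : v ∉ σ) (hs : Disjoint s σ) :
    s ∈ (X.linkOf σ).linkFaces v ↔ s ≠ ∅ ∧ s ∪ σ ∈ X.linkFaces v := by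
  simp only [linkFaces, linkOf, Set.mem_ofPred_eq, Finset.insert_union, Finset.mem_union,
    Finset.disjoint_insert_left, hvσ, hs, ne_eq, Finset.insert_ne_empty, Finset.union_eq_empty]
  tauto

theorem union_mem_inducedFaces {U : Finset V} (hs : s ∈ (X.linkOf σ).inducedFaces ↑U) :
    s ∪ σ ∈ X.inducedFaces ↑(U ∪ σ) :=
  ⟨hs.1.2.2, by simpa using Set.union_subset_union_left _ hs.2⟩

/-- The join of `A` with the full simplex on `σ`, inside `X_{U ∪ σ}`. -/
def joinFaces (X : SimplicialComplex V) (U σ : Finset V) (A : Set (Finset V)) :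
    Set (Finset V) :=
  {s | s ∈ X.inducedFaces ↑(U ∪ σ) ∧ (s \ σ = ∅ ∨ s \ σ ∈ A)}

theorem isSubcomplexOfInduced_joinFaces {U : Finset V} {A : Set (Finset V)}
    (hA : ∀ s ∈ A, ∀ t ⊆ s, t ≠ ∅ → t ∈ A) :
    X.IsSubcomplexOfInduced ↑(U ∪ σ) (X.joinFaces U σ A) := by
  refine ⟨fun _ hs => hs.1, ?_⟩
  rintro s ⟨⟨hsX, hsU⟩, hsA⟩ t hts htne
  refine ⟨⟨X.down_closed s hsX t hts htne, (Finset.coe_subset.mpr hts).trans hsU⟩, ?_⟩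
  have hsub : t \ σ ⊆ s \ σ := Finset.sdiff_subset_sdiff hts subset_rfl
  rcases Finset.eq_empty_or_nonempty (t \ σ) with h | h
  · exact Or.inl h
  · rcases hsA with hempty | hmem
    · exact Or.inl (Finset.subset_empty.mp (hempty ▸ hsub))
    · exact Or.inr (hA _ hmem _ hsub h.ne_empty)

theorem union_mem_joinFaces_iff {U : Finset V} {A : Set (Finset V)}
    (hs : s ∈ (X.linkOf σ).inducedFaces ↑U) : s ∪ σ ∈ X.joinFaces U σ A ↔ s ∈ A := by
  have hsdiff : (s ∪ σ) \ σ = s := by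
    rw [Finset.union_sdiff_right, Finset.sdiff_eq_self_of_disjoint hs.1.1]
  simp only [joinFaces, Set.mem_ofPred_eq, hsdiff, hs.1.2.1, false_or,
    and_iff_right (union_mem_inducedFaces hs)]

theorem IsAmple.exists_linkOf_linkFaces_inter_eq {r : ℕ} (hX : X.IsAmple r)
    (hσ : σ ∈ X.faces) (U : Finset V) (hU : ↑U ⊆ (X.linkOf σ).vertexSet)
    (hcard : U.card + σ.card ≤ r) (A : Set (Finset V))
    (hA : (X.linkOf σ).IsSubcomplexOfInduced ↑U A) :
    ∃ v ∈ (X.linkOf σ).vertexSet, v ∉ U ∧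
      (X.linkOf σ).linkFaces v ∩ (X.linkOf σ).inducedFaces ↑U = A := by
  have hUσ : ↑(U ∪ σ) ⊆ X.vertexSet := by
    rw [Finset.coe_union]
    exact Set.union_subset (hU.trans vertexSet_linkOf_subset)
      fun x hx => X.down_closed σ hσ {x} (by simpa using hx) (by simp)
  obtain ⟨v, -, hvUσ, heq⟩ := hX.2 (U ∪ σ) hUσ ((Finset.card_union_le U σ).trans hcard)
    (X.joinFaces U σ A) (isSubcomplexOfInduced_joinFaces hA.2)
  have hvσ : v ∉ σ := fun h => hvUσ (Finset.mem_union_right _ h)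
  have hσ_link : σ ∈ X.linkFaces v := by
    have hσ_join : σ ∈ X.joinFaces U σ A :=
      ⟨⟨hσ, by simp⟩, Or.inl (Finset.sdiff_self σ)⟩
    exact (heq ▸ hσ_join).1
  refine ⟨v, ⟨by simpa using hvσ, by simp, by simpa using hσ_link.2.2⟩,
    fun h => hvUσ (Finset.mem_union_left _ h), ?_⟩
  ext s
  by_cases hs : s ∈ (X.linkOf σ).inducedFaces ↑U
  · rw [Set.mem_inter_iff, and_iff_left hs, mem_linkFaces_linkOf hvσ hs.1.1,
      and_iff_right hs.1.2.1, ← union_mem_joinFaces_iff hs, ← heq, Set.mem_inter_iff,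
      and_iff_left (union_mem_inducedFaces hs)]
  · exact iff_of_false (fun h => hs h.2) (fun h => hs (hA.1 h))

theorem IsAmple.linkOf {r : ℕ} (hX : X.IsAmple r) (hσ : σ ∈ X.faces) (hσr : σ.card ≤ r) :
    (X.linkOf σ).IsAmple (r - σ.card) := by
  refine ⟨?_, fun U hU hUcard A hA =>
    hX.exists_linkOf_linkFaces_inter_eq hσ U hU (by omega) A hA⟩
  obtain ⟨v, hv, -⟩ := hX.exists_linkOf_linkFaces_inter_eq hσ ∅ (by simp) (by simpa using hσr)
    ∅ ⟨Set.empty_subset _, by simp⟩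
  exact ⟨_, hv⟩

end SimplicialComplex

open SimplicialComplex in
/-- **The link of every `k`-dimensional simplex in an `r`-ample simplicial complex is
`(r-k-1)`-ample.** -/
theorem linkOf_isAmple {V : Type*} [DecidableEq V]
    (X : SimplicialComplex V) (r k : ℕ) (hX : X.IsAmple r)
    (σ : Finset V) (hσ : σ ∈ X.faces) (hcard : σ.card = k + 1) (hk : k + 1 ≤ r) :
    (X.linkOf σ).IsAmple (r - k - 1) := by
  simpa [hcard, Nat.sub_sub] using hX.linkOf hσ (hcard ▸ hk)
end

section
/- Any simplicial map f: K → X from a simplicial complex K with at most r vertices into an r-ample simplicial complex X is null-homotopic; in fact f factors through a cone v * X_U for some vertex v, where U = f(V(K)). -/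
namespace SimplicialComplex

variable {V : Type*}

theorem coe_subset_vertexSet_of_mem_faces {X : SimplicialComplex V} {s : Finset V}
    (hs : s ∈ X.faces) : ↑s ⊆ X.vertexSet := fun x hx =>
  X.down_closed s hs {x} (Finset.singleton_subset_iff.2 hx) (Finset.singleton_ne_empty x)

theorem inducedFaces_isSubcomplexOfInduced (X : SimplicialComplex V) (U : Set V) :
    X.IsSubcomplexOfInduced U (X.inducedFaces U) :=
  ⟨subset_rfl, fun _ ⟨hs, hsU⟩ t hts ht =>
    ⟨X.down_closed _ hs t hts ht, (Finset.coe_subset.2 hts).trans hsU⟩⟩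

theorem IsAmple.exists_cone_vertex [DecidableEq V] {X : SimplicialComplex V} {r : ℕ}
    (hX : X.IsAmple r) {U : Finset V} (hUX : ↑U ⊆ X.vertexSet) (hUr : U.card ≤ r) :
    ∃ v ∈ X.vertexSet, v ∉ U ∧ ∀ s ∈ X.inducedFaces ↑U, insert v s ∈ X.faces := by
  obtain ⟨v, hvX, hvU, hlink⟩ :=
    hX.2 U hUX hUr _ (X.inducedFaces_isSubcomplexOfInduced ↑U)
  refine ⟨v, hvX, hvU, fun s hs => ?_⟩
  rw [← hlink] at hs
  exact hs.1.2.2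

end SimplicialComplex

open SimplicialComplex in
/-- **Any simplicial map from a complex with at most `r` vertices into an `r`-ample complex
is null-homotopic**: it factors through a cone `v * X_U` where `U = f(V(K))`.  Combinatorially,
there is a vertex `v ∉ U` such that adjoining `v` to the image of any simplex of `K`
yields a simplex of `X` (so the image lies in the contractible cone `v * X_U`). -/
theorem simplicial_map_factors_through_cone {V W : Type*} [DecidableEq W]
    (X : SimplicialComplex W) (r : ℕ) (hX : X.IsAmple r)
    (K : SimplicialComplex V) (hfin : K.vertexSet.Finite) (hcard : K.vertexSet.ncard ≤ r)
    (f : V → W) (hf : ∀ s ∈ K.faces, s.image f ∈ X.faces) :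
    ∃ v ∈ X.vertexSet, v ∉ f '' K.vertexSet ∧
      ∀ s ∈ K.faces, insert v (s.image f) ∈ X.faces := by
  have hfinU : (f '' K.vertexSet).Finite := hfin.image f
  set U : Finset W := hfinU.toFinset
  have hUX : ↑U ⊆ X.vertexSet := by
    intro w hw
    obtain ⟨u, hu, rfl⟩ := hfinU.mem_toFinset.1 hw
    simpa [vertexSet] using hf {u} hu
  have hUr : U.card ≤ r := by
    rw [← Set.ncard_eq_toFinset_card _ hfinU]
    exact (Set.ncard_image_le hfin).trans hcard
  obtain ⟨v, hvX, hvU, hcone⟩ := hX.exists_cone_vertex hUX hUr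
  refine ⟨v, hvX, by simpa [U] using hvU, fun s hs => hcone _ ⟨hf s hs, ?_⟩⟩
  rw [Finset.coe_image, Set.Finite.coe_toFinset]
  exact Set.image_mono (coe_subset_vertexSet_of_mem_faces hs)
end

section
/- Let X be an r-ample simplicial complex and let Y be obtained from X by removing a finite set F of simplexes (together with all simplexes having a face in F). If |F| + Σ_{σ∈F} dim(σ) < M'(k) + k, then Y is (r-k)-ample. -/
/-- `M'(k)`: the number of simplicial complexes with vertex set contained in `{1, …, k}`. -/
noncomputable def numComplexes (k : ℕ) : ℕ :=
  Set.ncard {F : Finset (Finset (Fin k)) |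
    ∅ ∉ F ∧ ∀ s ∈ F, ∀ t ⊆ s, t ≠ ∅ → t ∈ F}

namespace SimplicialComplex

/-- The complex obtained from `X` by removing a set `F` of simplices together with
all simplices having a face in `F`. -/
def removeFaces {V : Type*} (X : SimplicialComplex V) (F : Finset (Finset V)) :
    SimplicialComplex V where
  faces := {s | s ∈ X.faces ∧ ∀ t ∈ F, ¬ t ⊆ s}
  not_empty_mem := fun h => X.not_empty_mem h.1
  down_closed := fun s hs t hts ht =>
    ⟨X.down_closed s hs.1 t hts ht, fun u hu hut => hs.2 u hu (hut.trans hts)⟩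

end SimplicialComplex

/-!
Fix `U` with `|U| ≤ r - k` and a subcomplex `A` of `Y_U`. A vertex `v ∉ U` with
`lk_X(v) ∩ X_U = A` still works in `Y` unless some `σ ∈ F` blocks it, i.e. `σ = {v} ∪ a` with
`a ∈ A ∪ {∅}`; as `a ⊆ U`, such a `σ` blocks only its unique vertex outside `U`, so at most `|F|`
vertices are blocked. On the other hand `r`-ampleness yields `M'(k) + k` such vertices: first a
set `W` of `k` of them, added one at a time so that the join `A * Δ_W` stays in `X`, and then,
for every complex `G` on `W`, a vertex whose link over `U ∪ W` is `A * G`.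
-/

namespace SimplicialComplex

variable {V : Type*}

lemma mem_insert_empty_of_subset {A : Set (Finset V)}
    (hA : ∀ s ∈ A, ∀ t ⊆ s, t ≠ ∅ → t ∈ A) {s t : Finset V} (hs : s ∈ insert ∅ A)
    (hts : t ⊆ s) : t ∈ insert ∅ A := by
  by_cases ht : t = ∅
  · exact Or.inl ht
  rcases hs with rfl | hs
  · exact absurd (Finset.subset_empty.mp hts) ht
  · exact Or.inr (hA s hs t hts ht)

lemma ne_empty_of_mem (X : SimplicialComplex V) {s : Finset V} (hs : s ∈ X.faces) : s ≠ ∅ :=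
  fun h => X.not_empty_mem (h ▸ hs)

lemma IsSubcomplexOfInduced.mono {X Y : SimplicialComplex V} {U : Set V} {A : Set (Finset V)}
    (hXY : X.faces ⊆ Y.faces) (hA : X.IsSubcomplexOfInduced U A) :
    Y.IsSubcomplexOfInduced U A :=
  ⟨fun _ hs => ⟨hXY (hA.1 hs).1, (hA.1 hs).2⟩, hA.2⟩

lemma removeFaces_faces_subset (X : SimplicialComplex V) (F : Finset (Finset V)) :
    (X.removeFaces F).faces ⊆ X.faces :=
  fun _ hs => hs.1

def fullSimplex (W : Finset V) : Set (Finset V) := {c | c ≠ ∅ ∧ c ⊆ W}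

section Join

variable [DecidableEq V] {X : SimplicialComplex V} {A C C' : Set (Finset V)} {U W : Finset V}

/-- The join `A * C` of a complex `A` on vertices outside `W` with a complex `C` on `W`,
encoded by splitting each simplex into its parts off and on `W`. -/
def join (A C : Set (Finset V)) (W : Finset V) : Set (Finset V) :=
  {s | s ≠ ∅ ∧ s \ W ∈ insert ∅ A ∧ s ∩ W ∈ insert ∅ C}

lemma join_mono_right (h : C ⊆ C') : join A C W ⊆ join A C' W :=
  fun _ ⟨hs, hsA, hsC⟩ => ⟨hs, hsA, Set.insert_subset_insert h hsC⟩

lemma mem_join_fullSimplex {s : Finset V} :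
    s ∈ join A (fullSimplex W) W ↔ s ≠ ∅ ∧ s \ W ∈ insert ∅ A := by
  refine ⟨fun h => ⟨h.1, h.2.1⟩, fun h => ⟨h.1, h.2, ?_⟩⟩
  by_cases hs : s ∩ W = ∅
  · exact Or.inl hs
  · exact Or.inr ⟨hs, Finset.inter_subset_right⟩

lemma mem_join_of_disjoint {s : Finset V} (hs : Disjoint s W) :
    s ∈ join A C W ↔ s ≠ ∅ ∧ s ∈ A := by
  change s ≠ ∅ ∧ s \ W ∈ insert ∅ A ∧ s ∩ W ∈ insert ∅ C ↔ _
  rw [Finset.sdiff_eq_self_of_disjoint hs, Finset.disjoint_iff_inter_eq_empty.mp hs]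
  exact and_congr_right fun h => (and_iff_left (Or.inl rfl)).trans (or_iff_right h)

lemma mem_iff_mem_join (hC : C ⊆ fullSimplex W) {c : Finset V} :
    c ∈ C ↔ c ∈ fullSimplex W ∧ c ∈ join A C W := by
  refine ⟨fun h => ⟨hC h, (hC h).1, Or.inl ?_, Or.inr ?_⟩, fun ⟨⟨hc, hcW⟩, _, _, h⟩ => ?_⟩
  · exact Finset.sdiff_eq_empty_iff_subset.mpr (hC h).2
  · rwa [Finset.inter_eq_left.mpr (hC h).2]
  · rw [Finset.inter_eq_left.mpr hcW] at h
    exact h.resolve_left hc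

lemma eq_of_join_eq (hC : C ⊆ fullSimplex W) (hC' : C' ⊆ fullSimplex W)
    (h : join A C W = join A C' W) : C = C' := by
  ext c
  rw [mem_iff_mem_join hC, mem_iff_mem_join hC', h]

lemma join_isSubcomplexOfInduced (hA : X.IsSubcomplexOfInduced ↑U A)
    (hJ : join A (fullSimplex W) W ⊆ X.faces) (hC : C ⊆ fullSimplex W)
    (hCc : ∀ c ∈ C, ∀ t ⊆ c, t ≠ ∅ → t ∈ C) :
    X.IsSubcomplexOfInduced ↑(U ∪ W) (join A C W) := by
  refine ⟨fun s hs => ⟨hJ (join_mono_right hC hs), fun x hx => ?_⟩, ?_⟩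
  · by_cases hxW : x ∈ W
    · simp [hxW]
    have hx' : x ∈ s \ W := Finset.mem_sdiff.mpr ⟨hx, hxW⟩
    rcases hs.2.1 with h | h
    · simp [h] at hx'
    · simpa using Or.inl ((hA.1 h).2 hx')
  · rintro s ⟨-, hsA, hsC⟩ t hts ht
    exact ⟨ht, mem_insert_empty_of_subset hA.2 hsA (Finset.sdiff_subset_sdiff hts le_rfl),
      mem_insert_empty_of_subset hCc hsC (Finset.inter_subset_inter_right hts)⟩

lemma inter_inducedFaces_eq_of_join {L : Set (Finset V)} (hA : A ⊆ X.inducedFaces ↑U)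
    (hUW : Disjoint U W) (h : L ∩ X.inducedFaces ↑(U ∪ W) = join A C W) :
    L ∩ X.inducedFaces ↑U = A := by
  have key : ∀ s ∈ X.inducedFaces ↑U, s ∈ L ↔ s ∈ A := by
    rintro s ⟨hs, hsU⟩
    have hsU' : s ⊆ U := Finset.coe_subset.mp hsU
    have hsUW : s ∈ X.inducedFaces ↑(U ∪ W) :=
      ⟨hs, Finset.coe_subset.mpr (hsU'.trans Finset.subset_union_left)⟩
    calc s ∈ L ↔ s ∈ L ∩ X.inducedFaces ↑(U ∪ W) := (and_iff_left hsUW).symm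
      _ ↔ s ∈ A := by
        rw [h, mem_join_of_disjoint (hUW.mono_left hsU'), and_iff_right (X.ne_empty_of_mem hs)]
  ext s
  exact ⟨fun ⟨hL, hs⟩ => (key s hs).mp hL, fun hs => ⟨(key s (hA hs)).mpr hs, hA hs⟩⟩

lemma join_fullSimplex_insert_subset {v : V} (hv : v ∈ X.vertexSet)
    (hlk : join A (fullSimplex W) W ⊆ X.linkFaces v) :
    join A (fullSimplex (insert v W)) (insert v W) ⊆ X.faces := by
  intro s hs
  rw [mem_join_fullSimplex, Finset.sdiff_insert, ← Finset.erase_sdiff_comm] at hs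
  obtain ⟨hs, hsA⟩ := hs
  by_cases ht : s.erase v = ∅
  · obtain rfl | rfl := (Finset.erase_eq_empty_iff s v).mp ht
    · exact absurd rfl hs
    · exact hv
  · have hvt : insert v (s.erase v) ∈ X.faces := (hlk (mem_join_fullSimplex.mpr ⟨ht, hsA⟩)).2.2
    exact X.down_closed _ hvt s (Finset.subset_insert_iff.mpr subset_rfl) hs

end Join

section Removal

variable [DecidableEq V] {X : SimplicialComplex V} {F : Finset (Finset V)} {A : Set (Finset V)}
  {v : V}

/-- `σ` blocks `v` over `A` if removing `σ` destroys a simplex `{v} ∪ a` with `a ∈ A ∪ {∅}`. -/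
def Blocks (A : Set (Finset V)) (σ : Finset V) (v : V) : Prop :=
  v ∈ σ ∧ σ.erase v ∈ insert ∅ A

lemma Blocks.eq_of_mem {U : Set V} (hA : ∀ a ∈ A, ↑a ⊆ U) {σ : Finset V} {w : V}
    (h : Blocks A σ v) (hw : w ∈ σ) (hwU : w ∉ U) : w = v := by
  by_contra hne
  have hw' : w ∈ σ.erase v := Finset.mem_erase.mpr ⟨hne, hw⟩
  rcases h.2 with h0 | ha
  · simp [h0] at hw'
  · exact hwU (hA _ ha hw')

lemma card_le_card_of_blocks {ι : Type*} {U : Set V} (hA : ∀ a ∈ A, ↑a ⊆ U) {f : ι → V}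
    (hf : Function.Injective f) (hfU : ∀ i, f i ∉ U) (hb : ∀ i, ∃ σ ∈ F, Blocks A σ (f i)) :
    Nat.card ι ≤ F.card := by
  choose σ hσF hσ using hb
  have hinj : Function.Injective fun i => (⟨σ i, hσF i⟩ : F) := fun i j hij => by
    have hσij : σ i = σ j := congrArg Subtype.val hij
    exact hf ((hσ j).eq_of_mem hA (hσij ▸ (hσ i).1) (hfU i))
  simpa using Nat.card_le_card_of_injective _ hinj

lemma mem_vertexSet_removeFaces (hF : ∅ ∉ F) (hv : v ∈ X.vertexSet)
    (hblock : ∀ σ ∈ F, ¬ Blocks A σ v) : v ∈ (X.removeFaces F).vertexSet := by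
  refine ⟨hv, fun σ hσ hσv => ?_⟩
  rcases Finset.subset_singleton_iff.mp hσv with rfl | rfl
  · exact hF hσ
  · exact hblock _ hσ ⟨Finset.mem_singleton_self v, Or.inl (Finset.erase_singleton v)⟩

lemma linkFaces_removeFaces_inter_inducedFaces {U : Set V}
    (hA : (X.removeFaces F).IsSubcomplexOfInduced U A)
    (hlk : X.linkFaces v ∩ X.inducedFaces U = A) (hblock : ∀ σ ∈ F, ¬ Blocks A σ v) :
    (X.removeFaces F).linkFaces v ∩ (X.removeFaces F).inducedFaces U = A := by
  ext s
  refine ⟨fun ⟨⟨hvs, hs, hvsY⟩, hsY, hsU⟩ => hlk ▸ ⟨⟨hvs, hs, hvsY.1⟩, hsY.1, hsU⟩, fun hsA => ?_⟩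
  obtain ⟨hsY, hsU⟩ := hA.1 hsA
  obtain ⟨⟨hvs, hs, hvsX⟩, -⟩ : s ∈ X.linkFaces v ∩ X.inducedFaces U := hlk ▸ hsA
  refine ⟨⟨hvs, hs, hvsX, fun σ hσ hσs => ?_⟩, hsY, hsU⟩
  by_cases hvσ : v ∈ σ
  · exact hblock σ hσ ⟨hvσ, mem_insert_empty_of_subset hA.2 (Or.inr hsA)
      (Finset.subset_insert_iff.mp hσs)⟩
  · exact hsY.2 σ hσ ((Finset.subset_insert_iff_of_notMem hvσ).mp hσs)

end Removal

def complexesOn (κ : Type*) : Set (Finset (Finset κ)) :=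
  {G | ∅ ∉ G ∧ ∀ s ∈ G, ∀ t ⊆ s, t ≠ ∅ → t ∈ G}

lemma numComplexes_eq_ncard (k : ℕ) : numComplexes k = (complexesOn (Fin k)).ncard := rfl

section Image

variable [DecidableEq V] {κ : Type*} {G : Finset (Finset κ)} {w : κ → V}

lemma image_subset_fullSimplex {W : Finset V} (hG : G ∈ complexesOn κ) (hw : ∀ i, w i ∈ W) :
    Finset.image w '' ↑G ⊆ fullSimplex W := by
  rintro _ ⟨s, hs, rfl⟩
  refine ⟨?_, fun x hx => ?_⟩
  · rw [Ne, Finset.image_eq_empty]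
    rintro rfl
    exact hG.1 hs
  · obtain ⟨i, -, rfl⟩ := Finset.mem_image.mp hx
    exact hw i

lemma image_down_closed (hG : G ∈ complexesOn κ) :
    ∀ c ∈ Finset.image w '' ↑G, ∀ t ⊆ c, t ≠ ∅ → t ∈ Finset.image w '' ↑G := by
  rintro _ ⟨s, hs, rfl⟩ t hts ht
  obtain ⟨s', hs's, rfl⟩ := Finset.subset_image_iff.mp hts
  exact ⟨s', hG.2 s hs s' hs's (by rintro rfl; exact ht (Finset.image_empty w)), rfl⟩

end Image

section Ample

variable [DecidableEq V] {X : SimplicialComplex V} {r : ℕ} {U W : Finset V} {A : Set (Finset V)}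

lemma IsAmple.exists_linkFaces_inter_eq_join (hX : X.IsAmple r) (hU : ↑U ⊆ X.vertexSet)
    (hW : ↑W ⊆ X.vertexSet) (hUW : (U ∪ W).card ≤ r) (hA : X.IsSubcomplexOfInduced ↑U A)
    (hJ : join A (fullSimplex W) W ⊆ X.faces) {C : Set (Finset V)} (hC : C ⊆ fullSimplex W)
    (hCc : ∀ c ∈ C, ∀ t ⊆ c, t ≠ ∅ → t ∈ C) :
    ∃ v ∈ X.vertexSet, v ∉ U ∪ W ∧ X.linkFaces v ∩ X.inducedFaces ↑(U ∪ W) = join A C W :=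
  hX.2 (U ∪ W) (by simpa using Set.union_subset hU hW) hUW _
    (join_isSubcomplexOfInduced hA hJ hC hCc)

lemma IsAmple.exists_join_fullSimplex_subset (hX : X.IsAmple r) (hU : ↑U ⊆ X.vertexSet)
    (hA : X.IsSubcomplexOfInduced ↑U A) {j : ℕ} (hj : U.card + j ≤ r) :
    ∃ W : Finset V, W.card = j ∧ ↑W ⊆ X.vertexSet ∧ Disjoint U W ∧
      (∀ w ∈ W, X.linkFaces w ∩ X.inducedFaces ↑U = A) ∧
      join A (fullSimplex W) W ⊆ X.faces := by
  induction j with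
  | zero =>
    refine ⟨∅, rfl, by simp, Finset.disjoint_empty_right U, by simp, fun s hs => ?_⟩
    obtain ⟨hs, hsA⟩ := mem_join_fullSimplex.mp hs
    rw [Finset.sdiff_empty] at hsA
    exact (hA.1 (hsA.resolve_left hs)).1
  | succ j ih =>
    obtain ⟨W, hWj, hW, hUW, hWlk, hJ⟩ := ih (by omega)
    obtain ⟨v, hv, hvUW, hvlk⟩ := hX.exists_linkFaces_inter_eq_join hU hW
      ((Finset.card_union_le U W).trans (by omega)) hA hJ subset_rfl
      fun c hc t htc ht => ⟨ht, htc.trans hc.2⟩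
    rw [Finset.mem_union, not_or] at hvUW
    refine ⟨insert v W, by rw [Finset.card_insert_of_notMem hvUW.2, hWj], ?_,
      Finset.disjoint_insert_right.mpr ⟨hvUW.1, hUW⟩, ?_,
      join_fullSimplex_insert_subset hv fun s hs => (hvlk.symm ▸ hs :).1⟩
    · simpa using Set.insert_subset hv hW
    · exact (Finset.forall_mem_insert _ _ _).mpr
        ⟨inter_inducedFaces_eq_of_join hA.1 hUW hvlk, hWlk⟩

lemma IsAmple.exists_injective_linkFaces_inter_eq (hX : X.IsAmple r) (hU : ↑U ⊆ X.vertexSet)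
    (hA : X.IsSubcomplexOfInduced ↑U A) {k : ℕ} (hk : U.card + k ≤ r) :
    ∃ f : complexesOn (Fin k) ⊕ Fin k → V, Function.Injective f ∧
      ∀ i, f i ∈ X.vertexSet ∧ f i ∉ U ∧ X.linkFaces (f i) ∩ X.inducedFaces ↑U = A := by
  obtain ⟨W, hWk, hW, hUW, hWlk, hJ⟩ := hX.exists_join_fullSimplex_subset hU hA hk
  let w : Fin k → V := fun i => (W.equivFinOfCardEq hWk).symm i
  have hw_inj : Function.Injective w := Subtype.val_injective.comp (Equiv.injective _)
  have hwW : ∀ i, w i ∈ W := fun i => ((W.equivFinOfCardEq hWk).symm i).2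
  let C : complexesOn (Fin k) → Set (Finset V) := fun G => Finset.image w '' ↑G.1
  have hC : ∀ G, C G ⊆ fullSimplex W := fun G => image_subset_fullSimplex G.2 hwW
  have hC_inj : Function.Injective C := fun G G' h => Subtype.ext <| Finset.coe_injective <|
    Set.image_injective.mpr (Finset.image_injective hw_inj) h
  choose v hv hvUW hvlk using fun G => hX.exists_linkFaces_inter_eq_join hU hW
    ((Finset.card_union_le U W).trans (by omega)) hA hJ (hC G) (image_down_closed G.2)
  have hv_inj : Function.Injective v := fun G G' h =>
    hC_inj (eq_of_join_eq (hC G) (hC G') ((hvlk G).symm.trans (h ▸ hvlk G')))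
  refine ⟨Sum.elim v w, hv_inj.sumElim hw_inj fun G i h =>
    hvUW G (Finset.mem_union_right U (h ▸ hwW i)), ?_⟩
  rintro (G | i)
  · exact ⟨hv G, fun h => hvUW G (Finset.mem_union_left W h),
      inter_inducedFaces_eq_of_join hA.1 hUW (hvlk G)⟩
  · exact ⟨hW (hwW i), Finset.disjoint_right.mp hUW (hwW i), hWlk _ (hwW i)⟩

lemma IsAmple.exists_unblocked_vertex (hX : X.IsAmple r) (hU : ↑U ⊆ X.vertexSet)
    (hA : X.IsSubcomplexOfInduced ↑U A) {k : ℕ} (hk : U.card + k ≤ r)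
    {F : Finset (Finset V)} (hF : F.card < numComplexes k + k) :
    ∃ v ∈ X.vertexSet, v ∉ U ∧ X.linkFaces v ∩ X.inducedFaces ↑U = A ∧
      ∀ σ ∈ F, ¬ Blocks A σ v := by
  obtain ⟨f, hf, hfX⟩ := hX.exists_injective_linkFaces_inter_eq hU hA hk
  by_contra! hblocked
  have hcard := card_le_card_of_blocks (fun a ha => (hA.1 ha).2) hf (fun i => (hfX i).2.1)
    fun i => hblocked (f i) (hfX i).1 (hfX i).2.1 (hfX i).2.2
  rw [Nat.card_sum, Nat.card_coe_set_eq, Nat.card_fin, ← numComplexes_eq_ncard] at hcard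
  omega

end Ample

end SimplicialComplex

open SimplicialComplex in
/-- **Resilience of ample complexes** (Theorem 3.1): if `X` is `r`-ample and `Y` is obtained
from `X` by removing a set `F` of simplices with `|F| + Σ_{σ ∈ F} dim σ < M'(k) + k`,
then `Y` is `(r-k)`-ample. -/
theorem removeFaces_isAmple {V : Type*} [DecidableEq V]
    (X : SimplicialComplex V) (r k : ℕ) (hk : k ≤ r) (hX : X.IsAmple r)
    (F : Finset (Finset V)) (hF : ∀ σ ∈ F, σ ∈ X.faces)
    (hsize : F.card + ∑ σ ∈ F, (σ.card - 1) < numComplexes k + k) :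
    (X.removeFaces F).IsAmple (r - k) := by
  have hF₀ : ∅ ∉ F := fun h => X.not_empty_mem (hF ∅ h)
  have hcard : F.card < numComplexes k + k := by omega
  refine ⟨?_, fun U hUY hUr A hAY => ?_⟩
  · obtain ⟨v, hv, -, -, hblock⟩ := hX.exists_unblocked_vertex (U := ∅) (A := ∅) (by simp)
      ⟨Set.empty_subset _, by simp⟩ (by simpa using hk) hcard
    exact ⟨{v}, mem_vertexSet_removeFaces hF₀ hv hblock⟩
  · have hUX : ↑U ⊆ X.vertexSet := fun x hx => (hUY hx).1
    obtain ⟨v, hv, hvU, hlk, hblock⟩ := hX.exists_unblocked_vertex hUX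
      (hAY.mono (X.removeFaces_faces_subset F)) (by omega) hcard
    exact ⟨v, mem_vertexSet_removeFaces hF₀ hv hblock, hvU,
      linkFaces_removeFaces_inter_inducedFaces hAY hlk hblock⟩
end
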